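/- arXiv:2503.14296 — 2 statements merged into one kernel-verified Lean document; each statement's English description precedes it below -/
import Mathlib

section
/- Let 0 < m < 1. For all real numbers a ≥ b, writing c^{(m)} := |c|^{m-1} c (with 0^{(m)} = 0) for the odd power function, one has a^{(m)} − b^{(m)} ≤ 2^{1−m} (a − b)^m. -/
/-- Subadditivity-type inequality: `x^m - y^m ≤ (x-y)^m` for `0 ≤ y ≤ x`, `0 < m ≤ 1`. -/
lemma oddPow_aux_sub (m : ℝ) (hm0 : 0 < m) (hm1 : m ≤ 1) (x y : ℝ) (hy : 0 ≤ y)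
    (hxy : y ≤ x) : x ^ m - y ^ m ≤ (x - y) ^ m := by
  have hxy' : 0 ≤ x - y := by linarith
  have h := NNReal.rpow_add_le_add_rpow (Real.toNNReal (x - y)) (Real.toNNReal y) hm0.le hm1
  rw [← Real.toNNReal_add hxy' hy, sub_add_cancel] at h
  have h' := NNReal.coe_le_coe.2 h
  rw [NNReal.coe_add, NNReal.coe_rpow, NNReal.coe_rpow, NNReal.coe_rpow,
    Real.coe_toNNReal _ (hy.trans hxy), Real.coe_toNNReal _ hxy',
    Real.coe_toNNReal _ hy] at h'
  linarith

/-- Concavity-type inequality: `x^m + y^m ≤ 2^(1-m) * (x+y)^m` for `x, y ≥ 0`, `0 ≤ m ≤ 1`. -/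
lemma oddPow_aux_add (m : ℝ) (hm0 : 0 ≤ m) (hm1 : m ≤ 1) (x y : ℝ) (hx : 0 ≤ x)
    (hy : 0 ≤ y) : x ^ m + y ^ m ≤ 2 ^ (1 - m) * (x + y) ^ m := by
  have hconc := (Real.concaveOn_rpow hm0 hm1).2 (Set.mem_Ici.2 hx) (Set.mem_Ici.2 hy)
    (by norm_num : (0:ℝ) ≤ 1/2) (by norm_num : (0:ℝ) ≤ 1/2) (by norm_num)
  simp only [smul_eq_mul] at hconc
  have h2 : ((1:ℝ)/2 * x + 1/2 * y) ^ m = (x + y) ^ m / 2 ^ m := by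
    have : (1:ℝ)/2 * x + 1/2 * y = (x + y) / 2 := by ring
    rw [this, Real.div_rpow (by linarith) (by norm_num)]
  rw [h2] at hconc
  have h3 : (2:ℝ) ^ (1 - m) = 2 / 2 ^ m := by
    rw [Real.rpow_sub (by norm_num), Real.rpow_one]
  rw [h3]
  have heq : (2:ℝ) / 2 ^ m * (x + y) ^ m = 2 * ((x + y) ^ m / 2 ^ m) := by ring
  rw [heq]
  linarith

/-- Odd power evaluated at a nonnegative number. -/
lemma oddPow_aux_nonneg (m : ℝ) (hm0 : 0 < m) (c : ℝ) (hc : 0 ≤ c) :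
    |c| ^ (m - 1) * c = c ^ m := by
  rcases eq_or_lt_of_le hc with rfl | h
  · simp [Real.zero_rpow hm0.ne']
  · rw [abs_of_pos h]
    nth_rewrite 2 [← Real.rpow_one c]
    rw [← Real.rpow_add h]
    ring_nf

/-- For `0 < m < 1` and reals `a ≥ b`, writing `c^{(m)} := |c|^(m-1) * c` for the odd
power function, one has `a^{(m)} - b^{(m)} ≤ 2^(1-m) * (a-b)^m`. -/
theorem oddPow_sub_le (m : ℝ) (hm0 : 0 < m) (hm1 : m < 1) (a b : ℝ) (hab : b ≤ a) :
    |a| ^ (m - 1) * a - |b| ^ (m - 1) * b ≤ 2 ^ (1 - m) * (a - b) ^ m := by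
  have hneg : ∀ c : ℝ, c ≤ 0 → |c| ^ (m - 1) * c = -((-c) ^ m) := by
    intro c hc
    have := oddPow_aux_nonneg m hm0 (-c) (by linarith)
    rw [abs_neg] at this
    nlinarith [this]
  have h2 : (1:ℝ) ≤ 2 ^ (1 - m) :=
    Real.one_le_rpow (by norm_num) (by linarith)
  rcases le_or_gt 0 b with hb | hb
  · -- both nonneg
    rw [oddPow_aux_nonneg m hm0 a (hb.trans hab), oddPow_aux_nonneg m hm0 b hb]
    have h1 := oddPow_aux_sub m hm0 hm1.le a b hb hab
    have h3 : (0:ℝ) ≤ (a - b) ^ m := Real.rpow_nonneg (by linarith) m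
    nlinarith
  rcases le_or_gt a 0 with ha | ha
  · -- both nonpos
    rw [hneg a ha, hneg b hb.le]
    have h1 := oddPow_aux_sub m hm0 hm1.le (-b) (-a) (by linarith) (by linarith)
    have heq : -b - -a = a - b := by ring
    rw [heq] at h1
    have h3 : (0:ℝ) ≤ (a - b) ^ m := Real.rpow_nonneg (by linarith) m
    nlinarith
  · -- b < 0 < a
    rw [oddPow_aux_nonneg m hm0 a ha.le, hneg b hb.le]
    have h1 := oddPow_aux_add m hm0.le hm1.le a (-b) ha.le (by linarith)
    have heq : a + -b = a - b := by ring
    rw [heq] at h1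
    linarith
end

section
/- Let N be a positive integer, R > 0, a < b, and let f : ℝ^N × (a, b] → ℝ be measurable with 0 ≤ f ≤ 1 almost everywhere. Then for every positive integer n there exist a positive integer m and a function f_n : ℝ^N × (a, b] → ℝ such that: (i) f_n is constant in t on each subinterval (a + k(b−a)/m, a + (k+1)(b−a)/m] for k = 0, …, m−1; (ii) for each fixed t ∈ (a, b], the function x ↦ f_n(x, t) is smooth; (iii) 1/n ≤ f_n ≤ 2 everywhere; and (iv) the L² norm of f − f_n on B_R × (a, b) is at most (1 + 2√((b−a)·|B_R|)) / n, where |B_R| is the Lebesgue measure of the ball B_R ⊂ ℝ^N. -/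
open MeasureTheory

namespace PWSA

noncomputable def sig (c z : ℝ) : ℝ :=
  (Real.log (1 + Real.exp (c * z)) - Real.log (1 + Real.exp (c * z - c))) / c

lemma one_add_exp_pos (y : ℝ) : 0 < 1 + Real.exp y := by positivity

lemma sig_contDiff (c : ℝ) : ContDiff ℝ (⊤ : ℕ∞) (sig c) := by
  apply ContDiff.div_const
  apply ContDiff.sub
  · exact ContDiff.log (contDiff_const.add (contDiff_const.mul contDiff_id).exp)
      (fun x => (one_add_exp_pos _).ne')
  · exact ContDiff.log (contDiff_const.add ((contDiff_const.mul contDiff_id).sub contDiff_const).exp)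
      (fun x => (one_add_exp_pos _).ne')

lemma sig_pos (c : ℝ) (hc : 0 < c) (z : ℝ) : 0 < sig c z := by
  apply div_pos _ hc
  apply sub_pos.2
  apply Real.log_lt_log (one_add_exp_pos _)
  have : Real.exp (c * z - c) < Real.exp (c * z) := by
    apply Real.exp_lt_exp.2; linarith
  linarith

lemma sig_le_one (c : ℝ) (hc : 0 < c) (z : ℝ) : sig c z ≤ 1 := by
  rw [sig, div_le_one hc, sub_le_iff_le_add]
  have h1 : 1 + Real.exp (c * z) ≤ Real.exp c * (1 + Real.exp (c * z - c)) := by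
    rw [mul_add, mul_one, ← Real.exp_add]
    have h2 : 1 ≤ Real.exp c := Real.one_le_exp hc.le
    have h3 : c + (c * z - c) = c * z := by ring
    rw [h3]
    linarith
  calc Real.log (1 + Real.exp (c * z)) ≤ Real.log (Real.exp c * (1 + Real.exp (c * z - c))) :=
        Real.log_le_log (one_add_exp_pos _) h1
    _ = c + Real.log (1 + Real.exp (c * z - c)) := by
        rw [Real.log_mul (Real.exp_pos c).ne' (one_add_exp_pos _).ne', Real.log_exp]

lemma sig_hasDerivAt (c : ℝ) (hc : 0 < c) (z : ℝ) :
    HasDerivAt (sig c)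
      (Real.exp (c*z) / (1 + Real.exp (c*z)) - Real.exp (c*z - c) / (1 + Real.exp (c*z - c))) z := by
  have h1 : HasDerivAt (fun z => Real.log (1 + Real.exp (c * z)))
      ((1 + Real.exp (c*z))⁻¹ * (c * Real.exp (c*z))) z := by
    have h : HasDerivAt (fun z => 1 + Real.exp (c * z)) (c * Real.exp (c * z)) z := by
      have := ((hasDerivAt_id z).const_mul c).exp
      simp only [mul_one, id_eq] at this
      simpa [mul_comm] using this.const_add 1
    exact (Real.hasDerivAt_log (one_add_exp_pos (c*z)).ne').comp z h
  have h2 : HasDerivAt (fun z => Real.log (1 + Real.exp (c * z - c)))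
      ((1 + Real.exp (c*z - c))⁻¹ * (c * Real.exp (c*z - c))) z := by
    have h : HasDerivAt (fun z => 1 + Real.exp (c * z - c)) (c * Real.exp (c * z - c)) z := by
      have := (((hasDerivAt_id z).const_mul c).sub_const c).exp
      simp only [mul_one, id_eq] at this
      simpa [mul_comm] using this.const_add 1
    exact (Real.hasDerivAt_log (one_add_exp_pos (c*z - c)).ne').comp z h
  have := (h1.sub h2).div_const c
  refine this.congr_deriv ?_
  field_simp

lemma sig_lipschitz (c : ℝ) (hc : 0 < c) : LipschitzWith 1 (sig c) := by
  apply lipschitzWith_of_nnnorm_deriv_le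
  · exact fun z => (sig_hasDerivAt c hc z).differentiableAt
  · intro z
    rw [(sig_hasDerivAt c hc z).deriv]
    rw [← NNReal.coe_le_coe]
    push_cast
    rw [Real.norm_eq_abs, abs_le]
    constructor
    · have hA : 0 ≤ Real.exp (c*z) / (1 + Real.exp (c*z)) := by positivity
      have hB : Real.exp (c*z - c) / (1 + Real.exp (c*z - c)) ≤ 1 := by
        rw [div_le_one (one_add_exp_pos _)]; linarith [Real.exp_pos (c*z-c)]
      linarith
    · have hA : Real.exp (c*z) / (1 + Real.exp (c*z)) ≤ 1 := by
        rw [div_le_one (one_add_exp_pos _)]; linarith [Real.exp_pos (c*z)]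
      have hB : 0 ≤ Real.exp (c*z - c) / (1 + Real.exp (c*z - c)) := by positivity
      linarith

lemma sig_near_id (c : ℝ) (hc : 0 < c) (u : ℝ) (hu0 : 0 ≤ u) (hu1 : u ≤ 1) :
    |sig c u - u| ≤ Real.log 2 / c := by
  have e2 : Real.log (1 + Real.exp (c*u)) - c*u = Real.log (1 + Real.exp (-(c*u))) := by
    have hfac : 1 + Real.exp (c*u) = Real.exp (c*u) * (1 + Real.exp (-(c*u))) := by
      rw [mul_add, mul_one, ← Real.exp_add]
      simp [add_comm]
    rw [hfac, Real.log_mul (Real.exp_pos _).ne' (one_add_exp_pos _).ne', Real.log_exp]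
    ring
  have key : sig c u - u =
      (Real.log (1 + Real.exp (-(c*u))) - Real.log (1 + Real.exp (c*u - c))) / c := by
    rw [sig]
    field_simp
    linarith
  rw [key, abs_div, abs_of_pos hc, div_le_div_iff_of_pos_right hc]
  have b1 : 0 ≤ Real.log (1 + Real.exp (-(c*u))) := Real.log_nonneg (by linarith [Real.exp_pos (-(c*u))])
  have b2 : Real.log (1 + Real.exp (-(c*u))) ≤ Real.log 2 := by
    apply Real.log_le_log (one_add_exp_pos _)
    have : Real.exp (-(c*u)) ≤ 1 := Real.exp_le_one_iff.2 (by nlinarith)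
    linarith
  have b3 : 0 ≤ Real.log (1 + Real.exp (c*u - c)) := Real.log_nonneg (by linarith [Real.exp_pos (c*u - c)])
  have b4 : Real.log (1 + Real.exp (c*u - c)) ≤ Real.log 2 := by
    apply Real.log_le_log (one_add_exp_pos _)
    have : Real.exp (c*u - c) ≤ 1 := Real.exp_le_one_iff.2 (by nlinarith)
    linarith
  rw [abs_le]
  constructor <;> linarith



lemma sw_approx (N : ℕ) (R : ℝ) (hR : 0 < R)
    (g : EuclideanSpace ℝ (Fin N) → ℝ) (hg : Continuous g) (ε : ℝ) (hε : 0 < ε) :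
    ∃ Q : EuclideanSpace ℝ (Fin N) → ℝ, ContDiff ℝ (⊤ : ℕ∞) Q ∧
      ∀ x ∈ Metric.closedBall (0 : EuclideanSpace ℝ (Fin N)) R, |Q x - g x| ≤ ε := by
  set K := Metric.closedBall (0 : EuclideanSpace ℝ (Fin N)) R
  haveI : CompactSpace K := isCompact_iff_compactSpace.mp (isCompact_closedBall _ _)
  set coordCM : Fin N → C(K, ℝ) := fun i =>
    ⟨fun x => (x : EuclideanSpace ℝ (Fin N)) i,
      (continuous_apply i).comp ((PiLp.continuous_ofLp 2 _).comp continuous_subtype_val)⟩ with hcoord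
  set A : Subalgebra ℝ C(K, ℝ) := Algebra.adjoin ℝ (Set.range coordCM) with hA
  have hsep : A.SeparatesPoints := by
    intro x y hxy
    have : (x : EuclideanSpace ℝ (Fin N)) ≠ (y : EuclideanSpace ℝ (Fin N)) := by
      exact fun h => hxy (Subtype.ext h)
    obtain ⟨i, hi⟩ : ∃ i, (x : EuclideanSpace ℝ (Fin N)) i ≠ (y : EuclideanSpace ℝ (Fin N)) i := by
      by_contra h
      push_neg at h
      exact this (PiLp.ext h)
    refine ⟨coordCM i, ⟨coordCM i, Algebra.subset_adjoin ⟨i, rfl⟩, rfl⟩, hi⟩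
  obtain ⟨⟨q, hqA⟩, hq⟩ :=
    ContinuousMap.exists_mem_subalgebra_near_continuous_of_separatesPoints A hsep
      (fun x : K => g x) (hg.comp continuous_subtype_val) ε hε
  -- extension property
  have hext : ∀ r ∈ A, ∃ Q : EuclideanSpace ℝ (Fin N) → ℝ, ContDiff ℝ (⊤ : ℕ∞) Q ∧
      ∀ (x) (hx : x ∈ K), Q x = r ⟨x, hx⟩ := by
    intro r hr
    induction hr using Algebra.adjoin_induction with
    | mem x hx =>
        obtain ⟨i, rfl⟩ := hx
        exact ⟨fun y => y i, (EuclideanSpace.proj i : _ →L[ℝ] ℝ).contDiff, fun x hx => rfl⟩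
    | algebraMap r => exact ⟨fun _ => r, contDiff_const, fun x hx => rfl⟩
    | add x y hx hy ihx ihy =>
        obtain ⟨Qx, hQx, hQx'⟩ := ihx
        obtain ⟨Qy, hQy, hQy'⟩ := ihy
        exact ⟨Qx + Qy, hQx.add hQy, fun x hx => by
          simp [hQx' x hx, hQy' x hx]⟩
    | mul x y hx hy ihx ihy =>
        obtain ⟨Qx, hQx, hQx'⟩ := ihx
        obtain ⟨Qy, hQy, hQy'⟩ := ihy
        exact ⟨Qx * Qy, hQx.mul hQy, fun x hx => by
          simp [hQx' x hx, hQy' x hx]⟩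
  obtain ⟨Q, hQ, hQ'⟩ := hext q hqA
  refine ⟨Q, hQ, fun x hx => ?_⟩
  have := hq ⟨x, hx⟩
  rw [Real.norm_eq_abs] at this
  rw [hQ' x hx]
  exact this.le



lemma grid1 (a b : ℝ) (hab : a < b) (m : ℕ) (hm : 0 < m) (k : ℕ) (t : ℝ)
    (ht : t ∈ Set.Ioc (a + k * (b - a) / m) (a + (k + 1) * (b - a) / m)) :
    ⌈(t - a) * m / (b - a)⌉ = (k : ℤ) + 1 := by
  have hba : (0:ℝ) < b - a := by linarith
  have hm' : (0:ℝ) < m := by exact_mod_cast hm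
  rw [Int.ceil_eq_iff]
  constructor
  · rw [lt_div_iff₀ hba]
    have h1 : (k:ℝ) * (b - a) < (t - a) * m := by
      rw [← div_lt_iff₀ hm']
      · linarith [ht.1]
    push_cast
    linarith
  · rw [div_le_iff₀ hba]
    have h2 : (t - a) * m ≤ ((k:ℝ) + 1) * (b - a) := by
      rw [← le_div_iff₀ hm']
      linarith [ht.2]
    push_cast
    linarith

lemma grid2 (a b : ℝ) (hab : a < b) (m : ℕ) (hm : 0 < m) (t : ℝ) (ht : t ∈ Set.Ioc a b) :
    a < a + ⌈(t - a) * m / (b - a)⌉ * (b - a) / m ∧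
    a + ⌈(t - a) * m / (b - a)⌉ * (b - a) / m ≤ b ∧
    |a + ⌈(t - a) * m / (b - a)⌉ * (b - a) / m - t| ≤ (b - a) / m := by
  have hba : (0:ℝ) < b - a := by linarith
  have hm' : (0:ℝ) < m := by exact_mod_cast hm
  set r : ℝ := (t - a) * m / (b - a) with hr
  have hr0 : 0 < r := by
    apply div_pos _ hba
    have : 0 < t - a := by linarith [ht.1]
    positivity
  have hz1 : (1:ℤ) ≤ ⌈r⌉ := Int.ceil_pos.2 hr0
  have hzm : ⌈r⌉ ≤ (m:ℤ) := by
    apply Int.ceil_le.2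
    push_cast
    rw [div_le_iff₀ hba]
    have := ht.2
    nlinarith
  have hle : r ≤ (⌈r⌉ : ℝ) := Int.le_ceil r
  have hlt : (⌈r⌉ : ℝ) < r + 1 := Int.ceil_lt_add_one r
  have hrt : r * (b - a) / m = t - a := by
    rw [hr, div_mul_cancel₀ _ hba.ne', mul_div_assoc, div_self hm'.ne', mul_one]
  have hz1' : (1:ℝ) ≤ (⌈r⌉:ℝ) := by exact_mod_cast hz1
  have hzm' : ((⌈r⌉:ℝ)) ≤ (m:ℝ) := by exact_mod_cast hzm
  refine ⟨?_, ?_, ?_⟩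
  · have : 0 < (⌈r⌉:ℝ) * (b - a) / m := by positivity
    linarith
  · have h1 : (⌈r⌉:ℝ) * (b - a) / m ≤ (m:ℝ) * (b - a) / m := by gcongr
    have h2 : (m:ℝ) * (b - a) / m = b - a := by
      field_simp
    linarith
  · have key : a + (⌈r⌉:ℝ) * (b - a) / m - t = ((⌈r⌉:ℝ) - r) * (b - a) / m := by
      rw [sub_mul, sub_div, hrt]
      ring
    rw [key, abs_of_nonneg]
    · calc ((⌈r⌉:ℝ) - r) * (b - a) / m ≤ 1 * (b - a) / m := by
            gcongr
            linarith
        _ = (b - a) / m := by ring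
    · have hnn : 0 ≤ (⌈r⌉:ℝ) - r := by linarith
      positivity

end PWSA

namespace PWSA

lemma clamp_dist (u v : ℝ) (h0 : 0 ≤ u) (h1 : u ≤ 1) :
    |u - max 0 (min 1 v)| ≤ |u - v| := by
  rcases le_total v 0 with hv | hv
  · rw [min_eq_right (by linarith : v ≤ 1), max_eq_left hv, sub_zero,
      abs_of_nonneg h0, abs_of_nonneg (by linarith)]
    linarith
  · rcases le_total 1 v with hv1 | hv1
    · rw [min_eq_left hv1, max_eq_right zero_le_one,
        abs_of_nonpos (by linarith), abs_of_nonpos (by linarith)]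
      linarith
    · rw [min_eq_right hv1, max_eq_right hv]

end PWSA

open PWSA in
/-- Approximation lemma: a measurable function `0 ≤ f ≤ 1` on `ℝ^N × (a, b]` can be
approximated in `L²(B_R × (a,b))` up to error `(1 + 2√((b-a)|B_R|))/n` by functions `f_n`
with `1/n ≤ f_n ≤ 2` that are piecewise constant in time and smooth in space. -/
theorem piecewise_smooth_approximation (N : ℕ) (hN : 0 < N) (R a b : ℝ) (hR : 0 < R)
    (hab : a < b) (f : EuclideanSpace ℝ (Fin N) × ℝ → ℝ) (hf : Measurable f)
    (hf01 : ∀ᵐ p : EuclideanSpace ℝ (Fin N) × ℝ ∂volume,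
      p.2 ∈ Set.Ioc a b → 0 ≤ f p ∧ f p ≤ 1) :
    ∀ n : ℕ, 0 < n → ∃ m : ℕ, 0 < m ∧ ∃ fn : EuclideanSpace ℝ (Fin N) × ℝ → ℝ,
      (∀ k : ℕ, k < m → ∀ x : EuclideanSpace ℝ (Fin N),
        ∀ t ∈ Set.Ioc (a + k * (b - a) / m) (a + (k + 1) * (b - a) / m),
          fn (x, t) = fn (x, a + (k + 1) * (b - a) / m)) ∧
      (∀ t ∈ Set.Ioc a b, ContDiff ℝ (⊤ : ℕ∞) (fun x => fn (x, t))) ∧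
      (∀ x : EuclideanSpace ℝ (Fin N), ∀ t ∈ Set.Ioc a b,
        1 / (n : ℝ) ≤ fn (x, t) ∧ fn (x, t) ≤ 2) ∧
      eLpNorm (fun p => f p - fn p) 2
          (volume.restrict (Metric.ball (0 : EuclideanSpace ℝ (Fin N)) R ×ˢ Set.Ioo a b)) ≤
        ENNReal.ofReal
          ((1 + 2 * Real.sqrt ((b - a) *
              (volume (Metric.ball (0 : EuclideanSpace ℝ (Fin N)) R)).toReal)) / n) := by
  intro n hn
  have hba : (0:ℝ) < b - a := by linarith
  have hn' : (0:ℝ) < n := by exact_mod_cast hn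
  have hn1 : (1:ℝ) ≤ n := by exact_mod_cast hn
  -- the truncated, compactly supported version of `f`
  set S : Set (EuclideanSpace ℝ (Fin N) × ℝ) := Metric.closedBall 0 R ×ˢ Set.Icc a b with hS
  have hSm : MeasurableSet S := measurableSet_closedBall.prod measurableSet_Icc
  set F : EuclideanSpace ℝ (Fin N) × ℝ → ℝ := S.indicator (fun p => max 0 (min 1 (f p))) with hF
  have hFmeas : Measurable F := (measurable_const.max (measurable_const.min hf)).indicator hSm
  have hF01 : ∀ p, 0 ≤ F p ∧ F p ≤ 1 := by
    intro p
    by_cases hp : p ∈ S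
    · rw [hF, Set.indicator_of_mem hp]
      exact ⟨le_max_left _ _, max_le zero_le_one (min_le_left _ _)⟩
    · rw [hF, Set.indicator_of_notMem hp]
      norm_num
  have hSfin : volume S ≠ ⊤ :=
    (((isCompact_closedBall _ _).prod isCompact_Icc).measure_lt_top).ne
  have hFmem : MemLp F 2 volume := by
    apply MemLp.of_le (memLp_indicator_const 2 hSm (1:ℝ) (Or.inr hSfin))
      hFmeas.aestronglyMeasurable
    filter_upwards with p
    by_cases hp : p ∈ S
    · simp only [Set.indicator_of_mem hp, Real.norm_eq_abs]
      rw [abs_of_nonneg (hF01 p).1, abs_of_nonneg zero_le_one]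
      exact (hF01 p).2
    · simp [hF, Set.indicator_of_notMem hp]
  -- continuous compactly supported approximation in L²
  obtain ⟨g, gsupp, hFg, gcont, _⟩ :=
    hFmem.exists_hasCompactSupport_eLpNorm_sub_le (ENNReal.ofNat_ne_top)
      (ε := ENNReal.ofReal (1/n)) (by
        simp only [ne_eq, ENNReal.ofReal_eq_zero, not_le]
        positivity)
  -- clamp it to [0,1]
  set g₁ : EuclideanSpace ℝ (Fin N) × ℝ → ℝ := fun p => max 0 (min 1 (g p)) with hg₁
  have hg₁cont : Continuous g₁ := continuous_const.max (continuous_const.min gcont)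
  have hg₁supp : HasCompactSupport g₁ := by
    have h : g₁ = (fun y => max 0 (min 1 y)) ∘ g := rfl
    rw [h]
    exact gsupp.comp_left (by norm_num)
  have hg₁01 : ∀ p, 0 ≤ g₁ p ∧ g₁ p ≤ 1 := fun p =>
    ⟨le_max_left _ _, max_le zero_le_one (min_le_left _ _)⟩
  have hFg₁ : eLpNorm (fun p => F p - g₁ p) 2 volume ≤ ENNReal.ofReal (1/n) := by
    refine le_trans (eLpNorm_mono (fun p => ?_)) hFg
    simp only [Real.norm_eq_abs, Pi.sub_apply]
    exact clamp_dist (F p) (g p) (hF01 p).1 (hF01 p).2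
  -- uniform continuity
  have hg₁u := hg₁supp.uniformContinuous_of_continuous hg₁cont
  obtain ⟨δ, hδpos, hδ⟩ := Metric.uniformContinuous_iff.mp hg₁u (1/(2*n)) (by positivity)
  -- the time grid
  set m : ℕ := ⌈(2*(b-a))/δ⌉₊ with hmdef
  have hm : 0 < m := Nat.ceil_pos.2 (by positivity)
  have hm' : (0:ℝ) < m := by exact_mod_cast hm
  have hstep : (b-a)/m ≤ δ/2 := by
    have h := Nat.le_ceil ((2*(b-a))/δ)
    rw [← hmdef] at h
    rw [div_le_div_iff₀ hm' (by norm_num : (0:ℝ) < 2)]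
    rw [div_le_iff₀ hδpos] at h
    nlinarith
  -- analytic spatial approximations on each time slice
  have hQex : ∀ z : ℤ, ∃ Q : EuclideanSpace ℝ (Fin N) → ℝ, ContDiff ℝ (⊤ : ℕ∞) Q ∧
      ∀ x ∈ Metric.closedBall (0 : EuclideanSpace ℝ (Fin N)) R,
        |Q x - g₁ (x, a + z * (b - a) / m)| ≤ 1/(4*n) := fun z =>
    sw_approx N R hR (fun x => g₁ (x, a + z * (b - a) / m))
      (hg₁cont.comp (continuous_id.prodMk continuous_const)) _ (by positivity)
  choose Q hQsmooth hQnear using hQex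
  -- the analytic squashing function
  set c : ℝ := 4*n with hcdef
  have hc : 0 < c := by positivity
  set jj : ℝ → ℤ := fun t => ⌈(t - a) * m / (b - a)⌉ with hjj
  have hjj' : ∀ t, jj t = ⌈(t - a) * m / (b - a)⌉ := fun t => rfl
  refine ⟨m, hm, fun p => sig c (Q (jj p.2) p.1) + 1/n, ?_, ?_, ?_, ?_⟩
  · -- piecewise constant in time
    intro k hk x t ht
    have h1 : jj t = (k:ℤ) + 1 := grid1 a b hab m hm k t ht
    have hlr : a + (k:ℝ) * (b - a) / m < a + ((k:ℝ) + 1) * (b - a) / m := by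
      have h2 : ((k:ℝ) + 1) * (b - a) / m = (k:ℝ) * (b - a) / m + (b-a)/m := by ring
      have h3 : 0 < (b-a)/m := by positivity
      rw [h2]
      linarith
    have h2 : jj (a + ((k:ℝ) + 1) * (b - a) / m) = (k:ℤ) + 1 :=
      grid1 a b hab m hm k _ ⟨hlr, le_refl _⟩
    simp only [h1, h2]
  · -- smoothness in space
    intro t ht
    exact ((sig_contDiff c).comp (hQsmooth (jj t))).add contDiff_const
  · -- bounds
    intro x t ht
    constructor
    · have := sig_pos c hc (Q (jj t) x)
      have h1n : 1/(n:ℝ) ≤ 1/(n:ℝ) := le_refl _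
      linarith
    · have := sig_le_one c hc (Q (jj t) x)
      have h1n : 1/(n:ℝ) ≤ 1 := by
        rw [div_le_one hn']
        exact hn1
      linarith
  · -- the L² estimate
    set fn : EuclideanSpace ℝ (Fin N) × ℝ → ℝ := fun p => sig c (Q (jj p.2) p.1) + 1/n with hfn
    set s : Set (EuclideanSpace ℝ (Fin N) × ℝ) :=
      Metric.ball 0 R ×ˢ Set.Ioo a b with hsdef
    have hsm : MeasurableSet s := measurableSet_ball.prod measurableSet_Ioo
    have hae : (fun p => f p - fn p) =ᵐ[volume.restrict s] (fun p => F p - fn p) := by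
      filter_upwards [ae_restrict_mem hsm, ae_restrict_of_ae hf01] with p hp hp01
      have hp2 : p.2 ∈ Set.Ioc a b := ⟨hp.2.1, hp.2.2.le⟩
      obtain ⟨h0, h1⟩ := hp01 hp2
      have hpS : p ∈ S := ⟨Metric.ball_subset_closedBall hp.1, ⟨hp2.1.le, hp2.2⟩⟩
      have hFp : F p = f p := by
        rw [hF, Set.indicator_of_mem hpS, min_eq_right h1, max_eq_right h0]
      rw [hFp]
    rw [eLpNorm_congr_ae hae]
    -- measurability of fn
    have hjm : Measurable jj := by
      apply Int.measurable_ceil.comp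
      exact ((measurable_id.sub_const a).mul_const (m:ℝ)).div_const (b-a)
    have hWm : Measurable (fun q : EuclideanSpace ℝ (Fin N) × ℤ => Q q.2 q.1) :=
      measurable_from_prod_countable_left (fun z => ((hQsmooth z).continuous).measurable)
    have hfnm : Measurable fn := by
      have h : fn = fun p => sig c ((fun q : EuclideanSpace ℝ (Fin N) × ℤ => Q q.2 q.1)
          (p.1, jj p.2)) + 1/n := rfl
      rw [h]
      exact (((sig_contDiff c).continuous.measurable).comp
        (hWm.comp (measurable_fst.prodMk (hjm.comp measurable_snd)))).add measurable_const
    -- split into two terms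
    have hsplit : (fun p => F p - fn p) =
        (fun p => F p - g₁ p) + (fun p => g₁ p - fn p) := by
      funext p
      simp only [Pi.add_apply]
      ring
    rw [hsplit]
    have h1m : AEStronglyMeasurable (fun p => F p - g₁ p) (volume.restrict s) :=
      (hFmeas.sub hg₁cont.measurable).aestronglyMeasurable
    have h2m : AEStronglyMeasurable (fun p => g₁ p - fn p) (volume.restrict s) :=
      (hg₁cont.measurable.sub hfnm).aestronglyMeasurable
    refine le_trans (eLpNorm_add_le h1m h2m one_le_two) ?_
    -- term 1
    have hterm1 : eLpNorm (fun p => F p - g₁ p) 2 (volume.restrict s) ≤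
        ENNReal.ofReal (1/n) :=
      le_trans (eLpNorm_mono_measure _ Measure.restrict_le_self) hFg₁
    -- term 2: pointwise bound
    have hbound : ∀ᵐ p ∂(volume.restrict s), ‖g₁ p - fn p‖ ≤ 2/n := by
      filter_upwards [ae_restrict_mem hsm] with p hp
      obtain ⟨x, t⟩ := p
      have hxK : x ∈ Metric.closedBall (0 : EuclideanSpace ℝ (Fin N)) R :=
        Metric.ball_subset_closedBall hp.1
      have htI : t ∈ Set.Ioc a b := ⟨hp.2.1, hp.2.2.le⟩
      obtain ⟨he1, he2, he3⟩ := grid2 a b hab m hm t htI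
      have hA : |Q (jj t) x - g₁ (x, a + (jj t : ℝ) * (b - a) / m)| ≤ 1/(4*n) := by
        have h := hQnear (jj t) x hxK
        rwa [hcdef] at h
      have hB : |g₁ (x, a + (jj t : ℝ) * (b - a) / m) - g₁ (x, t)| < 1/(2*n) := by
        have hd : dist ((x, a + (jj t : ℝ) * (b - a) / m) :
            EuclideanSpace ℝ (Fin N) × ℝ) (x, t) < δ := by
          rw [Prod.dist_eq]
          simp only [dist_self, Real.dist_eq]
          rw [max_eq_right (abs_nonneg _)]
          calc |a + (jj t : ℝ) * (b - a) / m - t| ≤ (b-a)/m := he3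
            _ ≤ δ/2 := hstep
            _ < δ := by linarith
        have h := hδ hd
        rwa [Real.dist_eq] at h
      have hu0 : 0 ≤ g₁ (x, t) := (hg₁01 (x, t)).1
      have hu1 : g₁ (x, t) ≤ 1 := (hg₁01 (x, t)).2
      have hLip : |sig c (Q (jj t) x) - sig c (g₁ (x, t))| ≤ |Q (jj t) x - g₁ (x, t)| := by
        have h := (sig_lipschitz c hc).dist_le_mul (Q (jj t) x) (g₁ (x, t))
        simpa [Real.dist_eq] using h
      have hNear : |sig c (g₁ (x, t)) - g₁ (x, t)| ≤ Real.log 2 / c :=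
        sig_near_id c hc _ hu0 hu1
      have hlog : Real.log 2 / c ≤ 1/(4*n) := by
        rw [hcdef]
        have h2 : Real.log 2 ≤ 1 := by
          have := Real.log_two_lt_d9
          linarith
        gcongr
      have hxy : |Q (jj t) x - g₁ (x, t)| ≤ 1/(4*n) + 1/(2*n) := by
        calc |Q (jj t) x - g₁ (x, t)| ≤
            |Q (jj t) x - g₁ (x, a + (jj t : ℝ) * (b - a) / m)| +
            |g₁ (x, a + (jj t : ℝ) * (b - a) / m) - g₁ (x, t)| := abs_sub_le _ _ _
          _ ≤ 1/(4*n) + 1/(2*n) := by linarith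
      have htri : |g₁ (x, t) - sig c (Q (jj t) x)| ≤ 1/n := by
        rw [abs_sub_comm]
        calc |sig c (Q (jj t) x) - g₁ (x, t)| ≤
            |sig c (Q (jj t) x) - sig c (g₁ (x, t))| +
            |sig c (g₁ (x, t)) - g₁ (x, t)| := abs_sub_le _ _ _
          _ ≤ (1/(4*n) + 1/(2*n)) + 1/(4*n) := by
              have := hLip.trans hxy
              have := hNear.trans hlog
              linarith
          _ = 1/n := by field_simp; ring
      simp only [Real.norm_eq_abs, hfn]
      have hsub : g₁ (x, t) - (sig c (Q (jj t) x) + 1/(n:ℝ)) =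
          (g₁ (x, t) - sig c (Q (jj t) x)) - 1/n := by ring
      rw [hsub]
      calc |(g₁ (x, t) - sig c (Q (jj t) x)) - 1/(n:ℝ)| ≤
          |g₁ (x, t) - sig c (Q (jj t) x)| + |1/(n:ℝ)| := abs_sub _ _
        _ ≤ 1/n + 1/n := by
            have h1 : |1/(n:ℝ)| = 1/n := abs_of_pos (by positivity)
            linarith
        _ = 2/n := by ring
    have hterm2 := eLpNorm_le_of_ae_bound (p := 2) (μ := volume.restrict s) hbound
    -- measure of the domain
    have hμs : (volume.restrict s) Set.univ =
        volume (Metric.ball (0 : EuclideanSpace ℝ (Fin N)) R) * ENNReal.ofReal (b - a) := by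
      rw [Measure.restrict_apply_univ, hsdef, Measure.volume_eq_prod,
        Measure.prod_prod, Real.volume_Ioo]
    set V := volume (Metric.ball (0 : EuclideanSpace ℝ (Fin N)) R) with hV
    have hVfin : V ≠ ⊤ := measure_ball_lt_top.ne
    have hVm : V * ENNReal.ofReal (b - a) = ENNReal.ofReal (V.toReal * (b - a)) := by
      rw [ENNReal.ofReal_mul ENNReal.toReal_nonneg, ENNReal.ofReal_toReal hVfin]
    have hexp : ((2 : ENNReal).toReal⁻¹ : ℝ) = (2:ℝ)⁻¹ := by norm_num
    have hpow : (V * ENNReal.ofReal (b - a)) ^ ((2 : ENNReal).toReal⁻¹ : ℝ) =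
        ENNReal.ofReal (Real.sqrt (V.toReal * (b - a))) := by
      rw [hVm, hexp, ENNReal.ofReal_rpow_of_nonneg (by positivity) (by norm_num)]
      congr 1
      rw [Real.sqrt_eq_rpow, one_div]
    calc eLpNorm (fun p => F p - g₁ p) 2 (volume.restrict s) +
          eLpNorm (fun p => g₁ p - fn p) 2 (volume.restrict s) ≤
        ENNReal.ofReal (1/n) +
          ENNReal.ofReal (Real.sqrt (V.toReal * (b - a))) * ENNReal.ofReal (2/n) := by
          apply add_le_add hterm1
          refine hterm2.trans ?_
          rw [hμs, hpow]
      _ = ENNReal.ofReal (1/n + Real.sqrt (V.toReal * (b - a)) * (2/n)) := by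
          rw [← ENNReal.ofReal_mul (Real.sqrt_nonneg _),
            ← ENNReal.ofReal_add (by positivity) (by positivity)]
      _ ≤ ENNReal.ofReal ((1 + 2 * Real.sqrt ((b - a) * V.toReal)) / n) := by
          apply ENNReal.ofReal_le_ofReal
          apply le_of_eq
          rw [mul_comm (b-a) V.toReal]
          field_simp
end
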